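/- arXiv:quant-ph/9811027 — 4 statements merged into one kernel-verified Lean document; each statement's English description precedes it below -/
import Mathlib

section
/- Each equally weighted mixture Φᵢⱼ = (Ψᵢ + Ψⱼ)/2 of two distinct orthogonal Bell-state projectors on ℂ²⊗ℂ² is a separable state. -/
open Matrix ComplexOrder Kronecker

/-- Squared Hilbert-Schmidt norm: ‖A‖²_HS = tr(A*A). -/
noncomputable def hsNormSq {n : Type*} [Fintype n] (A : Matrix n n ℂ) : ℝ :=
  (Aᴴ * A).trace.re

/-- A density matrix: positive semidefinite with trace 1. -/
def IsDensity {n : Type*} [Fintype n] [DecidableEq n] (ρ : Matrix n n ℂ) : Prop :=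
  ρ.PosSemidef ∧ ρ.trace = 1

/-- A separable (disentangled) state: a finite convex combination of
tensor products of density matrices. -/
def IsSepState {m n : Type*} [Fintype m] [Fintype n] [DecidableEq m] [DecidableEq n]
    (ρ : Matrix (m × n) (m × n) ℂ) : Prop :=
  ∃ (k : ℕ) (p : Fin k → ℝ) (ρ₁ : Fin k → Matrix m m ℂ) (ρ₂ : Fin k → Matrix n n ℂ),
    (∀ i, 0 ≤ p i) ∧ (∑ i, p i = 1) ∧ (∀ i, IsDensity (ρ₁ i)) ∧ (∀ i, IsDensity (ρ₂ i)) ∧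
    ρ = ∑ i, (p i : ℂ) • ((ρ₁ i) ⊗ₖ (ρ₂ i))

/-- The rank-one projector |v⟩⟨v| onto a vector v. -/
noncomputable def proj {n : Type*} [Fintype n] (v : n → ℂ) : Matrix n n ℂ :=
  Matrix.vecMulVec v (star v)

/-- The four Bell vectors ψ₁,ψ₂,ψ₃,ψ₄ on ℂ²⊗ℂ². -/
noncomputable def bell (i : Fin 4) (p : Fin 2 × Fin 2) : ℂ :=
  (((Real.sqrt 2 : ℝ) : ℂ))⁻¹ *
    (if i = 0 then (if p = (0, 0) then 1 else if p = (1, 1) then 1 else 0)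
     else if i = 1 then (if p = (0, 0) then 1 else if p = (1, 1) then -1 else 0)
     else if i = 2 then (if p = (0, 1) then 1 else if p = (1, 0) then 1 else 0)
     else (if p = (0, 1) then 1 else if p = (1, 0) then -1 else 0))

/-!
Ψᵢ + Ψⱼ is the projector onto span{ψᵢ, ψⱼ}, and this span has an orthonormal basis a, b of
product vectors built from the eigenvectors of one Pauli matrix (σ_z for {ψ₁, ψ₂} and {ψ₃, ψ₄},
σ_x for {ψ₁, ψ₃} and {ψ₂, ψ₄}, σ_y for {ψ₁, ψ₄} and {ψ₂, ψ₃}), such that ψᵢ and ψⱼ are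
(a + b)/√2 and (a − b)/√2 up to phases. The parallelogram law
|a+b⟩⟨a+b| + |a−b⟩⟨a−b| = 2(|a⟩⟨a| + |b⟩⟨b|) then turns Φᵢⱼ into (|a⟩⟨a| + |b⟩⟨b|)/2,
an equal mixture of two product states.
-/

def kronVec {α m n : Type*} [Mul α] (u : m → α) (v : n → α) : m × n → α :=
  fun p => u p.1 * v p.2

section proj

variable {m n : Type*} [Fintype m] [Fintype n]

lemma isDensity_proj [DecidableEq n] {v : n → ℂ} (hv : v ⬝ᵥ star v = 1) :
    IsDensity (proj v) :=
  ⟨posSemidef_vecMulVec_self_star v, by rw [proj, trace_vecMulVec, hv]⟩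

lemma proj_smul (c : ℂ) (v : n → ℂ) : proj (c • v) = (c * star c) • proj v := by
  simp only [proj, star_smul, smul_vecMulVec, vecMulVec_smul, smul_smul, mul_comm]

lemma proj_add_add_proj_sub (a b : n → ℂ) :
    proj (a + b) + proj (a - b) = (2 : ℂ) • (proj a + proj b) := by
  simp only [proj, star_add, star_sub, add_vecMulVec, vecMulVec_add, sub_vecMulVec, vecMulVec_sub]
  module

lemma proj_kronVec (u : m → ℂ) (v : n → ℂ) : proj (kronVec u v) = proj u ⊗ₖ proj v := by
  ext ⟨i, k⟩ ⟨j, l⟩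
  simp only [proj, kronVec, vecMulVec_apply, kroneckerMap_apply, Pi.star_apply, star_mul']
  ring

lemma proj_add_proj_eq_of_eq_smul {ψ φ a b : n → ℂ} {c d : ℂ}
    (hc : c * star c = 2⁻¹) (hd : d * star d = 2⁻¹)
    (hψ : ψ = c • (a + b)) (hφ : φ = d • (a - b)) :
    proj ψ + proj φ = proj a + proj b := by
  rw [hψ, hφ, proj_smul, proj_smul, hc, hd, ← smul_add, proj_add_add_proj_sub, smul_smul]
  norm_num

end proj

lemma isSepState_half_add_kronecker {m n : Type*} [Fintype m] [Fintype n] [DecidableEq m]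
    [DecidableEq n] {ρ₁ ρ₂ : Matrix m m ℂ} {σ₁ σ₂ : Matrix n n ℂ}
    (hρ₁ : IsDensity ρ₁) (hσ₁ : IsDensity σ₁) (hρ₂ : IsDensity ρ₂) (hσ₂ : IsDensity σ₂) :
    IsSepState ((2 : ℂ)⁻¹ • (ρ₁ ⊗ₖ σ₁ + ρ₂ ⊗ₖ σ₂)) := by
  refine ⟨2, ![2⁻¹, 2⁻¹], ![ρ₁, ρ₂], ![σ₁, σ₂], ?_, ?_, ?_, ?_, ?_⟩
  · simp [Fin.forall_fin_two]
  · norm_num [Fin.sum_univ_two]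
  · simp [Fin.forall_fin_two, *]
  · simp [Fin.forall_fin_two, *]
  · simp only [Fin.sum_univ_two, smul_add]
    norm_num

lemma isSepState_half_proj_add_proj {m n : Type*} [Fintype m] [Fintype n] [DecidableEq m]
    [DecidableEq n] {ψ φ : m × n → ℂ} {u u' : m → ℂ} {v v' : n → ℂ} {c d : ℂ}
    (hu : IsDensity (proj u)) (hv : IsDensity (proj v)) (hu' : IsDensity (proj u'))
    (hv' : IsDensity (proj v')) (hc : c * star c = 2⁻¹) (hd : d * star d = 2⁻¹)
    (hψ : ψ = c • (kronVec u v + kronVec u' v')) (hφ : φ = d • (kronVec u v - kronVec u' v')) :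
    IsSepState ((2 : ℂ)⁻¹ • (proj ψ + proj φ)) := by
  rw [proj_add_proj_eq_of_eq_smul hc hd hψ hφ, proj_kronVec, proj_kronVec]
  exact isSepState_half_add_kronecker hu hv hu' hv'

lemma isDensity_proj_pair {a b : ℂ} (h : a * star a + b * star b = 1) :
    IsDensity (proj ![a, b]) :=
  isDensity_proj (by simpa [dotProduct, Fin.sum_univ_two] using h)

section qubit

local notation "s" => ((Real.sqrt 2 : ℝ) : ℂ)⁻¹

lemma ofReal_sqrt_two_sq : ((Real.sqrt 2 : ℝ) : ℂ) ^ 2 = 2 := by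
  rw [← Complex.ofReal_pow, Real.sq_sqrt zero_le_two, Complex.ofReal_ofNat]

lemma inv_sqrt_two_mul_star : s * star s = 2⁻¹ := by
  rw [← Complex.ofReal_inv, Complex.star_def, Complex.conj_ofReal, Complex.ofReal_inv,
    ← sq, inv_pow, ofReal_sqrt_two_sq]

lemma phase_mul_inv_sqrt_two_mul_star {ω : ℂ} (hω : ω * star ω = 1) :
    (ω * s) * star (ω * s) = 2⁻¹ := by
  rw [star_mul', mul_mul_mul_comm, hω, inv_sqrt_two_mul_star, one_mul]

noncomputable def equatorialKet (ω : ℂ) : Fin 2 → ℂ := ![s, s * ω]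

lemma isDensity_proj_equatorialKet {ω : ℂ} (hω : ω * star ω = 1) :
    IsDensity (proj (equatorialKet ω)) :=
  isDensity_proj_pair <| by
    rw [mul_comm s ω, phase_mul_inv_sqrt_two_mul_star hω, inv_sqrt_two_mul_star]
    norm_num

lemma isSepState_half_proj_bell_add_of_lt {i j : Fin 4} (hij : i < j) :
    IsSepState ((2 : ℂ)⁻¹ • (proj (bell i) + proj (bell j))) := by
  have ket0 : IsDensity (proj ![1, 0]) := isDensity_proj_pair (by simp)
  have ket1 : IsDensity (proj ![0, 1]) := isDensity_proj_pair (by simp)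
  have plus := isDensity_proj_equatorialKet (ω := 1) (by simp)
  have minus := isDensity_proj_equatorialKet (ω := -1) (by simp)
  have plusI := isDensity_proj_equatorialKet (ω := Complex.I) (by simp)
  have minusI := isDensity_proj_equatorialKet (ω := -Complex.I) (by simp)
  have hs : s * star s = 2⁻¹ := inv_sqrt_two_mul_star
  have hIs : (Complex.I * s) * star (Complex.I * s) = 2⁻¹ :=
    phase_mul_inv_sqrt_two_mul_star (by simp)
  (fin_cases i <;> fin_cases j <;> simp only [Fin.mk_lt_mk] at hij <;> try omega) <;>
  [refine isSepState_half_proj_add_proj ket0 ket0 ket1 ket1 hs hs ?_ ?_;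
   refine isSepState_half_proj_add_proj plus plus minus minus hs hs ?_ ?_;
   refine isSepState_half_proj_add_proj plusI minusI minusI plusI hs hIs ?_ ?_;
   refine isSepState_half_proj_add_proj minusI minusI plusI plusI hs hIs ?_ ?_;
   refine isSepState_half_proj_add_proj minus plus plus minus hs hs ?_ ?_;
   refine isSepState_half_proj_add_proj ket0 ket1 ket1 ket0 hs hs ?_ ?_]
  all_goals
    funext ⟨p, q⟩
    fin_cases p <;> fin_cases q <;> simp [bell, kronVec, equatorialKet] <;> field_simp <;>
      norm_num [ofReal_sqrt_two_sq]

end qubit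

theorem bell_mixtures_separable (i j : Fin 4) (hij : i ≠ j) :
    IsSepState ((2 : ℂ)⁻¹ • (proj (bell i) + proj (bell j))) := by
  rcases hij.lt_or_gt with hlt | hgt
  · exact isSepState_half_proj_bell_add_of_lt hlt
  · rw [add_comm]
    exact isSepState_half_proj_bell_add_of_lt hgt
end

section
/- The Werner state W = (3/4)·(1/4)𝟙 + (1/4)Ψ₁ on ℂ²⊗ℂ² (i.e., W_{ψ₁,1/3} with ε = 1/3) is separable. -/
open Matrix ComplexOrder Kronecker

/-! Each Pauli matrix `σ` is a traceless Hermitian involution, so `(1 ± σ)/2` are pure states.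
Averaging `(1 + sσ)/2 ⊗ (1 + sσᵀ)/2` over the signs `s = ±1` cancels the cross terms and leaves
`(1 + σ ⊗ σᵀ)/2`, while `∑ σ ⊗ σᵀ = 4Ψ₁ - 1` over the three Pauli matrices. Hence `W` is the
uniform mixture of the six product states `ρ ⊗ ρᵀ`, `ρ` running over the Pauli eigenstates. -/

lemma Matrix.PosSemidef.of_isHermitian_of_mul_self {R n : Type*} [CommRing R] [PartialOrder R]
    [StarRing R] [StarOrderedRing R] [Fintype n] {P : Matrix n n R} (hP : P.IsHermitian)
    (hPP : P * P = P) : P.PosSemidef := by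
  rw [← hPP]
  nth_rewrite 1 [← hP]
  exact posSemidef_conjTranspose_mul_self P

lemma isSepState_sum_kronecker {m n ι : Type*} [Fintype m] [Fintype n] [DecidableEq m]
    [DecidableEq n] [Fintype ι] (p : ι → ℝ) (ρ₁ : ι → Matrix m m ℂ) (ρ₂ : ι → Matrix n n ℂ)
    (hp : ∀ i, 0 ≤ p i) (hp₁ : ∑ i, p i = 1) (hρ₁ : ∀ i, IsDensity (ρ₁ i))
    (hρ₂ : ∀ i, IsDensity (ρ₂ i)) :
    IsSepState (∑ i, (p i : ℂ) • (ρ₁ i ⊗ₖ ρ₂ i)) := by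
  let e := (Fintype.equivFin ι).symm
  refine ⟨Fintype.card ι, p ∘ e, ρ₁ ∘ e, ρ₂ ∘ e, fun i => hp _, ?_, fun i => hρ₁ _,
    fun i => hρ₂ _, ?_⟩
  · rw [← hp₁]; exact e.sum_comp p
  · exact (e.sum_comp fun i => (p i : ℂ) • (ρ₁ i ⊗ₖ ρ₂ i)).symm

section Involution

variable {n : Type*} [DecidableEq n]

/-- The projector onto the `s`-eigenspace of an involution `σ`; for the Pauli matrices these are
the six states `|0⟩, |1⟩, |±⟩, |±i⟩`. -/
noncomputable def eigenProj (σ : Matrix n n ℂ) (s : ℤˣ) : Matrix n n ℂ :=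
  (2 : ℂ)⁻¹ • (1 + ((s : ℤ) : ℂ) • σ)

lemma isHermitian_eigenProj {σ : Matrix n n ℂ} (hσ : σ.IsHermitian) (s : ℤˣ) :
    (eigenProj σ s).IsHermitian :=
  (isHermitian_one.add (hσ.smul (by simp [IsSelfAdjoint]))).smul (by simp [IsSelfAdjoint])

variable [Fintype n]

lemma eigenProj_mul_self {σ : Matrix n n ℂ} (hσσ : σ * σ = 1) (s : ℤˣ) :
    eigenProj σ s * eigenProj σ s = eigenProj σ s := by
  have hs : ((s : ℤ) : ℂ) * (s : ℤ) = 1 := by norm_cast; simp [Int.units_mul_self]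
  simp only [eigenProj, smul_mul_smul_comm, add_mul, mul_add, one_mul, mul_one, hσσ, hs]
  module

lemma trace_eigenProj {σ : Matrix n n ℂ} (hn : Fintype.card n = 2) (htr : σ.trace = 0) (s : ℤˣ) :
    (eigenProj σ s).trace = 1 := by
  simp [eigenProj, trace_smul, htr, hn]

lemma isDensity_eigenProj {σ : Matrix n n ℂ} (hn : Fintype.card n = 2) (hσ : σ.IsHermitian)
    (hσσ : σ * σ = 1) (htr : σ.trace = 0) (s : ℤˣ) : IsDensity (eigenProj σ s) :=
  ⟨.of_isHermitian_of_mul_self (isHermitian_eigenProj hσ s) (eigenProj_mul_self hσσ s),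
    trace_eigenProj hn htr s⟩

end Involution

lemma sum_eigenProj_kronecker {m n : Type*} [DecidableEq m] [DecidableEq n]
    (σ : Matrix m m ℂ) (τ : Matrix n n ℂ) :
    ∑ s : ℤˣ, eigenProj σ s ⊗ₖ eigenProj τ s = (2 : ℂ)⁻¹ • (1 + σ ⊗ₖ τ) := by
  simp [eigenProj, add_kronecker, kronecker_add, smul_kronecker, kronecker_smul]
  module

noncomputable def pauli : Fin 3 → Matrix (Fin 2) (Fin 2) ℂ :=
  ![!![0, 1; 1, 0], !![0, -Complex.I; Complex.I, 0], !![1, 0; 0, -1]]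

lemma isHermitian_pauli (k : Fin 3) : (pauli k).IsHermitian := by
  fin_cases k <;> ext i j <;> fin_cases i <;> fin_cases j <;> simp [pauli]

lemma pauli_mul_self (k : Fin 3) : pauli k * pauli k = 1 := by
  fin_cases k <;> ext i j <;> fin_cases i <;> fin_cases j <;> simp [pauli]

lemma trace_pauli (k : Fin 3) : (pauli k).trace = 0 := by
  fin_cases k <;> simp [pauli, trace_fin_two]

lemma sum_pauli_kronecker_transpose :
    ∑ k, pauli k ⊗ₖ (pauli k)ᵀ = (4 : ℂ) • proj (bell 0) - 1 := by
  have hsqrt : ((√2 : ℝ) : ℂ)⁻¹ * ((√2 : ℝ) : ℂ)⁻¹ = 2⁻¹ := by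
    rw [← mul_inv, ← Complex.ofReal_mul, Real.mul_self_sqrt zero_le_two]; norm_num
  ext ⟨i, j⟩ ⟨k, l⟩
  fin_cases i <;> fin_cases j <;> fin_cases k <;> fin_cases l <;>
    simp [Fin.sum_univ_three, pauli, proj, bell, vecMulVec, one_apply, hsqrt] <;> norm_num

lemma werner_third_eq_sum_eigenProj_kronecker :
    (6 : ℂ)⁻¹ • (1 : Matrix (Fin 2 × Fin 2) (Fin 2 × Fin 2) ℂ) + (3 : ℂ)⁻¹ • proj (bell 0)
      = ∑ i : Fin 3 × ℤˣ, ((6⁻¹ : ℝ) : ℂ) •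
          (eigenProj (pauli i.1) i.2 ⊗ₖ eigenProj (pauli i.1)ᵀ i.2) := by
  rw [← Finset.smul_sum, Fintype.sum_prod_type]
  simp only [sum_eigenProj_kronecker, ← Finset.smul_sum, Finset.sum_add_distrib,
    sum_pauli_kronecker_transpose, Finset.sum_const, Finset.card_univ, Fintype.card_fin,
    Complex.ofReal_inv, Complex.ofReal_ofNat]
  module

/-- The Werner state W_{ψ₁,1/3} = (1/6)𝟙 + (1/3)Ψ₁ is separable. -/
theorem werner_third_separable :
    IsSepState ((6 : ℂ)⁻¹ • (1 : Matrix (Fin 2 × Fin 2) (Fin 2 × Fin 2) ℂ)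
      + (3 : ℂ)⁻¹ • proj (bell 0)) := by
  have hρ₁ (k : Fin 3) := isDensity_eigenProj rfl (isHermitian_pauli k) (pauli_mul_self k)
    (trace_pauli k)
  have hρ₂ (k : Fin 3) := isDensity_eigenProj rfl (isHermitian_pauli k).transpose
    (by rw [← transpose_mul, pauli_mul_self, transpose_one]) (by rw [trace_transpose, trace_pauli])
  rw [werner_third_eq_sum_eigenProj_kronecker]
  exact isSepState_sum_kronecker _ _ _ (fun _ => by norm_num) (by simp)
    (fun i => hρ₁ i.1 i.2) (fun i => hρ₂ i.1 i.2)
end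

section
/- For σ = λᵢΨᵢ + Σ_{j≠i} λⱼΦᵢⱼ with λₖ ≥ 0 summing to 1 (a mixture of a Bell state Ψᵢ with the separable states Φᵢⱼ), the Hilbert-Schmidt entanglement equals λᵢ²/3, with minimizing separable state σ̃ = λᵢW_{ψᵢ,1/3} + Σ_{j≠i} λⱼΦᵢⱼ. -/
open Matrix ComplexOrder Kronecker

/-- The equally weighted mixture Φᵢⱼ = (Ψᵢ + Ψⱼ)/2 of two Bell projectors. -/
noncomputable def PhiMix (i j : Fin 4) : Matrix (Fin 2 × Fin 2) (Fin 2 × Fin 2) ℂ :=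
  (2 : ℂ)⁻¹ • (proj (bell i) + proj (bell j))

/-- The Werner state W_{ψᵢ,1/3} = (1/6)𝟙 + (1/3)Ψᵢ. -/
noncomputable def wernerThird (i : Fin 4) : Matrix (Fin 2 × Fin 2) (Fin 2 × Fin 2) ℂ :=
  (6 : ℂ)⁻¹ • (1 : Matrix (Fin 2 × Fin 2) (Fin 2 × Fin 2) ℂ) + (3 : ℂ)⁻¹ • proj (bell i)


noncomputable def ip {n : Type*} [Fintype n] (A B : Matrix n n ℂ) : ℝ :=
  ∑ p, ∑ q, ((starRingEnd ℂ) (A p q) * B p q).re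

lemma hsNormSq_eq_ip {n : Type*} [Fintype n] (A : Matrix n n ℂ) : hsNormSq A = ip A A := by
  unfold hsNormSq ip
  rw [Matrix.trace, Complex.re_sum]
  rw [Finset.sum_comm]
  congr 1; ext q
  rw [Matrix.diag_apply, Matrix.mul_apply, Complex.re_sum]
  simp [Matrix.conjTranspose_apply]

lemma ip_self_eq {n : Type*} [Fintype n] (A : Matrix n n ℂ) :
    ip A A = ∑ p, ∑ q, Complex.normSq (A p q) := by
  unfold ip; congr 1; ext p; congr 1; ext q
  simp [Complex.normSq_apply, Complex.mul_re]

lemma ip_self_nonneg {n : Type*} [Fintype n] (A : Matrix n n ℂ) : 0 ≤ ip A A := by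
  rw [ip_self_eq]
  apply Finset.sum_nonneg; intro p _
  apply Finset.sum_nonneg; intro q _
  exact Complex.normSq_nonneg _

lemma ip_symm {n : Type*} [Fintype n] (A B : Matrix n n ℂ) : ip A B = ip B A := by
  unfold ip; congr 1; ext p; congr 1; ext q
  simp [Complex.mul_re]; ring

lemma ip_add_right {n : Type*} [Fintype n] (A B C : Matrix n n ℂ) :
    ip A (B + C) = ip A B + ip A C := by
  unfold ip; rw [← Finset.sum_add_distrib]; congr 1; ext p
  rw [← Finset.sum_add_distrib]; congr 1; ext q
  simp [Matrix.add_apply, mul_add]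

lemma ip_sub_right {n : Type*} [Fintype n] (A B C : Matrix n n ℂ) :
    ip A (B - C) = ip A B - ip A C := by
  unfold ip; rw [← Finset.sum_sub_distrib]; congr 1; ext p
  rw [← Finset.sum_sub_distrib]; congr 1; ext q
  simp [Matrix.sub_apply, mul_sub]

lemma ip_smul_right {n : Type*} [Fintype n] (A B : Matrix n n ℂ) (r : ℝ) :
    ip A ((r : ℂ) • B) = r * ip A B := by
  unfold ip; rw [Finset.mul_sum]; congr 1; ext p
  rw [Finset.mul_sum]; congr 1; ext q
  simp [Matrix.smul_apply, Complex.mul_re]; ring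

lemma ip_sum_right {n : Type*} [Fintype n] {k : Type*} (s : Finset k)
    (A : Matrix n n ℂ) (f : k → Matrix n n ℂ) :
    ip A (∑ j ∈ s, f j) = ∑ j ∈ s, ip A (f j) := by
  classical
  induction s using Finset.induction with
  | empty => simp [ip]
  | insert _ _ h ih => rw [Finset.sum_insert h, Finset.sum_insert h, ip_add_right, ih]

lemma ip_smul_left {n : Type*} [Fintype n] (A B : Matrix n n ℂ) (r : ℝ) :
    ip ((r : ℂ) • A) B = r * ip A B := by
  rw [ip_symm, ip_smul_right, ip_symm]

lemma key_expand {n : Type*} [Fintype n] (D W : Matrix n n ℂ) (t : ℝ) :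
    0 ≤ hsNormSq D - 2 * t * ip W D + t ^ 2 * hsNormSq W := by
  have h := ip_self_nonneg (D - (t : ℂ) • W)
  have e : ip (D - (t:ℂ) • W) (D - (t:ℂ) • W)
      = ip D D - 2 * t * ip W D + t^2 * ip W W := by
    rw [ip_sub_right, ip_symm (D - (t:ℂ)•W) D, ip_sub_right, ip_symm (D - (t:ℂ)•W) ((t:ℂ)•W),
      ip_sub_right, ip_smul_left, ip_smul_right, ip_smul_right, ip_symm D W, ip_smul_left]
    ring
  rw [e] at h
  rw [hsNormSq_eq_ip, hsNormSq_eq_ip]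
  linarith

def ci (i : Fin 4) (p : Fin 2 × Fin 2) : ℂ :=
    (if i = 0 then (if p = (0, 0) then 1 else if p = (1, 1) then 1 else 0)
     else if i = 1 then (if p = (0, 0) then 1 else if p = (1, 1) then -1 else 0)
     else if i = 2 then (if p = (0, 1) then 1 else if p = (1, 0) then 1 else 0)
     else (if p = (0, 1) then 1 else if p = (1, 0) then -1 else 0))

noncomputable def irt2 : ℂ := (((Real.sqrt 2 : ℝ) : ℂ))⁻¹

lemma conj_irt2 : (starRingEnd ℂ) irt2 = irt2 := by
  unfold irt2
  rw [← Complex.ofReal_inv, Complex.conj_ofReal]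

lemma irt2_mul_irt2 : irt2 * irt2 = (2:ℂ)⁻¹ := by
  unfold irt2
  rw [← mul_inv, ← Complex.ofReal_mul, Real.mul_self_sqrt (by norm_num)]
  norm_num

lemma bell_eq (i : Fin 4) (p : Fin 2 × Fin 2) : bell i p = irt2 * ci i p := rfl

lemma proj_apply {n : Type*} [Fintype n] (v : n → ℂ) (p q : n) :
    proj v p q = v p * (starRingEnd ℂ) (v q) := by
  simp [proj, Matrix.vecMulVec_apply, Pi.star_apply, RCLike.star_def]

lemma proj_bell_apply (i : Fin 4) (p q : Fin 2 × Fin 2) :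
    proj (bell i) p q = (2:ℂ)⁻¹ * (ci i p * ci i q) := by
  rw [proj_apply, bell_eq, bell_eq, _root_.map_mul, conj_irt2]
  have hc : (starRingEnd ℂ) (ci i q) = ci i q := by
    unfold ci
    split_ifs <;> simp
  rw [hc, show irt2 * ci i p * (irt2 * ci i q) = (irt2 * irt2) * (ci i p * ci i q) by ring,
    irt2_mul_irt2]

-- orthonormality
lemma bell_inner (i j : Fin 4) :
    ∑ p, (starRingEnd ℂ) (bell i p) * bell j p = if i = j then 1 else 0 := by
  have e : ∀ p, (starRingEnd ℂ) (bell i p) * bell j p = (2:ℂ)⁻¹ * (ci i p * ci j p) := by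
    intro p
    rw [bell_eq, bell_eq, _root_.map_mul, conj_irt2]
    have hc : (starRingEnd ℂ) (ci i p) = ci i p := by unfold ci; split_ifs <;> simp
    rw [hc, show irt2 * ci i p * (irt2 * ci j p) = irt2 * irt2 * (ci i p * ci j p) from by ring,
      irt2_mul_irt2]
  simp only [e]
  fin_cases i <;> fin_cases j <;>
    simp [ci, Fintype.sum_prod_type, Fin.sum_univ_two, Prod.ext_iff] <;> norm_num

-- sum of four bell projectors is identity
lemma sum_proj_bell : ∑ i : Fin 4, proj (bell i) = 1 := by
  funext p q
  rw [Matrix.sum_apply]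
  simp only [proj_bell_apply]
  fin_cases p <;> fin_cases q <;>
    simp [ci, Fin.sum_univ_four, Matrix.one_apply, Prod.ext_iff] <;> norm_num

lemma ip_proj_proj {n : Type*} [Fintype n] (u v : n → ℂ) :
    ip (proj u) (proj v) = Complex.normSq (∑ p, (starRingEnd ℂ) (u p) * v p) := by
  unfold ip
  simp only [← Complex.re_sum]
  have e : ∑ p, ∑ q, (starRingEnd ℂ) (proj u p q) * proj v p q
      = (∑ p, (starRingEnd ℂ) (u p) * v p) * (starRingEnd ℂ) (∑ q, (starRingEnd ℂ) (u q) * v q) := by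
    rw [map_sum, Finset.sum_mul_sum]
    congr 1; ext p; congr 1; ext q
    rw [proj_apply, proj_apply]
    simp only [_root_.map_mul, Complex.conj_conj]
    ring
  rw [e, Complex.mul_conj]
  simp

lemma ip_one_right {n : Type*} [Fintype n] [DecidableEq n] (M : Matrix n n ℂ) :
    ip M 1 = M.trace.re := by
  unfold ip
  rw [Matrix.trace, Complex.re_sum]
  congr 1; ext p
  rw [Finset.sum_eq_single p]
  · simp [Matrix.one_apply]
  · intro q _ hq; simp [Matrix.one_apply, hq.symm]
  · intro h; exact absurd (Finset.mem_univ p) h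

lemma ip_one_left {n : Type*} [Fintype n] [DecidableEq n] (M : Matrix n n ℂ) :
    ip 1 M = M.trace.re := by
  unfold ip
  rw [Matrix.trace, Complex.re_sum, Finset.sum_comm]
  congr 1; ext p
  rw [Finset.sum_eq_single p]
  · simp [Matrix.one_apply]
  · intro q _ hq; simp [Matrix.one_apply, hq]
  · intro h; exact absurd (Finset.mem_univ p) h

lemma ip_proj_right {n : Type*} [Fintype n] (M : Matrix n n ℂ) (u : n → ℂ) :
    ip (proj u) M = (∑ p, ∑ q, (starRingEnd ℂ) (u p) * u q * M p q).re := by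
  unfold ip
  simp only [← Complex.re_sum]
  congr 1
  refine Finset.sum_congr rfl fun p _ => Finset.sum_congr rfl fun q _ => ?_
  rw [proj_apply]
  simp only [_root_.map_mul, Complex.conj_conj]

lemma proj_posSemidef {n : Type*} [Fintype n] (v : n → ℂ) : (proj v).PosSemidef := by
  have : proj v = replicateCol Unit v * (replicateCol Unit v)ᴴ := by
    rw [Matrix.conjTranspose_replicateCol, proj, Matrix.vecMulVec_eq Unit]
  rw [this]
  exact Matrix.posSemidef_self_mul_conjTranspose _

lemma proj_trace {n : Type*} [Fintype n] (v : n → ℂ)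
    (hv : ∑ p, Complex.normSq (v p) = 1) : (proj v).trace = 1 := by
  have : (proj v).trace = ∑ p, (Complex.normSq (v p) : ℂ) := by
    rw [Matrix.trace]
    congr 1; ext p
    rw [Matrix.diag_apply, proj, Matrix.vecMulVec_apply]
    simp [Pi.star_apply, RCLike.star_def, Complex.mul_conj]
  rw [this, ← Complex.ofReal_sum, hv]; norm_num

lemma proj_isDensity {n : Type*} [Fintype n] [DecidableEq n] (v : n → ℂ)
    (hv : ∑ p, Complex.normSq (v p) = 1) : IsDensity (proj v) :=
  ⟨proj_posSemidef v, proj_trace v hv⟩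

lemma proj_kron {m n : Type*} [Fintype m] [Fintype n] (u : m → ℂ) (v : n → ℂ) :
    proj u ⊗ₖ proj v = proj (fun p : m × n => u p.1 * v p.2) := by
  funext p q
  rw [Matrix.kroneckerMap_apply]
  simp only [proj, Matrix.vecMulVec_apply, Pi.star_apply, RCLike.star_def, _root_.map_mul]
  ring

lemma psd_re (A : Matrix (Fin 2) (Fin 2) ℂ) (h : A.PosSemidef) (x : Fin 2 → ℂ) :
    0 ≤ ((starRingEnd ℂ) (x 0) * (A 0 0 * x 0 + A 0 1 * x 1)
       + (starRingEnd ℂ) (x 1) * (A 1 0 * x 0 + A 1 1 * x 1)).re := by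
  have h2 := h.dotProduct_mulVec_nonneg x
  rw [Complex.le_def] at h2
  have : star x ⬝ᵥ A *ᵥ x = (starRingEnd ℂ) (x 0) * (A 0 0 * x 0 + A 0 1 * x 1)
       + (starRingEnd ℂ) (x 1) * (A 1 0 * x 0 + A 1 1 * x 1) := by
    simp [dotProduct, mulVec, Fin.sum_univ_two]
  rw [this] at h2
  simpa using h2.1

structure D2 (A : Matrix (Fin 2) (Fin 2) ℂ) : Prop where
  ha : 0 ≤ (A 0 0).re
  hc : 0 ≤ (A 1 1).re
  haim : (A 0 0).im = 0
  hcim : (A 1 1).im = 0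
  hs : (A 0 0).re + (A 1 1).re = 1
  hherm : A 1 0 = (starRingEnd ℂ) (A 0 1)
  hdet : Complex.normSq (A 0 1) ≤ (A 0 0).re * (A 1 1).re

lemma isDensity_d2 (A : Matrix (Fin 2) (Fin 2) ℂ)
    (h : A.PosSemidef ∧ A.trace = 1) : D2 A := by
  obtain ⟨hp, ht⟩ := h
  have hH := hp.1
  rw [Matrix.IsHermitian] at hH
  have hherm : A 1 0 = (starRingEnd ℂ) (A 0 1) := by
    have := congrFun (congrFun hH 1) 0
    simpa [Matrix.conjTranspose_apply] using this.symm
  have haim : (A 0 0).im = 0 := by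
    have h00 := congrFun (congrFun hH 0) 0
    simp only [Matrix.conjTranspose_apply] at h00
    have := congrArg Complex.im h00
    simp at this; linarith
  have hcim : (A 1 1).im = 0 := by
    have h11 := congrFun (congrFun hH 1) 1
    simp only [Matrix.conjTranspose_apply] at h11
    have := congrArg Complex.im h11
    simp at this; linarith
  have hA00 : A 0 0 = ((A 0 0).re : ℂ) := Complex.ext rfl haim
  have hA11 : A 1 1 = ((A 1 1).re : ℂ) := Complex.ext rfl hcim
  have ha : 0 ≤ (A 0 0).re := by
    have := psd_re A hp ![1, 0]; simp at this
    rw [hA00] at this; simpa using this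
  have hc : 0 ≤ (A 1 1).re := by
    have := psd_re A hp ![0, 1]; simp at this
    rw [hA11] at this; simpa using this
  have hsum : (A 0 0).re + (A 1 1).re = 1 := by
    have := congrArg Complex.re ht
    simpa [Matrix.trace, Matrix.diag, Fin.sum_univ_two] using this
  have hdet : Complex.normSq (A 0 1) ≤ (A 0 0).re * (A 1 1).re := by
    set a := (A 0 0).re with hadef
    set c := (A 1 1).re with hcdef
    set b := A 0 1 with hbdef
    have k1 : 0 ≤ a * (a * c - Complex.normSq b) := by
      have h1 := psd_re A hp ![b, -(a : ℂ)]
      simp only [Matrix.cons_val_zero, Matrix.cons_val_one, Matrix.head_cons] at h1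
      rw [hherm, hA00, hA11] at h1
      simp [Complex.normSq_apply, Complex.mul_re, Complex.mul_im] at h1
      simp [Complex.normSq_apply]
      nlinarith [h1]
    have k2 : 0 ≤ c * (a * c - Complex.normSq b) := by
      have h1 := psd_re A hp ![(c : ℂ), -(starRingEnd ℂ) b]
      simp only [Matrix.cons_val_zero, Matrix.cons_val_one, Matrix.head_cons] at h1
      rw [hherm, hA00, hA11] at h1
      simp [Complex.normSq_apply, Complex.mul_re, Complex.mul_im] at h1
      simp [Complex.normSq_apply]
      nlinarith [h1]
    nlinarith [k1, k2, hsum]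
  exact ⟨ha, hc, haim, hcim, hsum, hherm, hdet⟩
lemma two_re_le (br bi br' bi' x y u v : ℝ)
    (hb : br * br + bi * bi ≤ x * y) (hb' : br' * br' + bi' * bi' ≤ u * v)
    (hx : 0 ≤ x) (hy : 0 ≤ y) (hu : 0 ≤ u) (hv : 0 ≤ v) :
    2 * (br * br' - bi * bi') ≤ x * v + y * u := by
  have hS0 : 0 ≤ x * v + y * u := by positivity
  have key : (br * br' - bi * bi') ^ 2 ≤ (br * br + bi * bi) * (br' * br' + bi' * bi') := by
    nlinarith [sq_nonneg (br * bi' + bi * br')]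
  have hmm : (br * br + bi * bi) * (br' * br' + bi' * bi') ≤ (x * y) * (u * v) :=
    mul_le_mul hb hb' (add_nonneg (mul_self_nonneg br') (mul_self_nonneg bi'))
      (mul_nonneg hx hy)
  have h2 : (2 * (br * br' - bi * bi')) ^ 2 ≤ (x * v + y * u) ^ 2 := by
    nlinarith [sq_nonneg (x * v - y * u)]
  nlinarith [h2, hS0]

set_option maxHeartbeats 1000000 in
lemma kron_overlap (i : Fin 4) (A B : Matrix (Fin 2) (Fin 2) ℂ)
    (hA : IsDensity A) (hB : IsDensity B) :
    ip (proj (bell i)) (A ⊗ₖ B) ≤ 1 / 2 := by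
  obtain ⟨ha, hc, haim, hcim, hs, hherm, hdet⟩ := isDensity_d2 A hA
  obtain ⟨ha', hc', haim', hcim', hs', hherm', hdet'⟩ := isDensity_d2 B hB
  have hA00 : A 0 0 = ((A 0 0).re : ℂ) := Complex.ext rfl haim
  have hA11 : A 1 1 = ((A 1 1).re : ℂ) := Complex.ext rfl hcim
  have hB00 : B 0 0 = ((B 0 0).re : ℂ) := Complex.ext rfl haim'
  have hB11 : B 1 1 = ((B 1 1).re : ℂ) := Complex.ext rfl hcim'
  rw [ip_proj_right]
  have e : ∀ p q : Fin 2 × Fin 2, (starRingEnd ℂ) (bell i p) * bell i q * (A ⊗ₖ B) p q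
      = (2:ℂ)⁻¹ * (ci i p * ci i q * (A p.1 q.1 * B p.2 q.2)) := by
    intro p q
    rw [bell_eq, bell_eq, _root_.map_mul, conj_irt2, Matrix.kroneckerMap_apply]
    have hc1 : (starRingEnd ℂ) (ci i p) = ci i p := by unfold ci; split_ifs <;> simp
    rw [hc1, show irt2 * ci i p * (irt2 * ci i q) = irt2 * irt2 * (ci i p * ci i q) from by ring,
      irt2_mul_irt2]
    ring
  simp only [e]
  simp only [Complex.normSq_apply] at hdet hdet'
  set a := (A 0 0).re
  set c := (A 1 1).re
  set a' := (B 0 0).re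
  set c' := (B 1 1).re
  set b := A 0 1 with hbdef
  set b' := B 0 1 with hb'def
  fin_cases i
  · simp only [Fintype.sum_prod_type, Fin.sum_univ_two, ci, Prod.ext_iff]
    norm_num
    rw [hherm, hherm', hA00, hA11, hB00, hB11]
    simp [Complex.mul_re, Complex.mul_im]
    nlinarith [two_re_le b.re b.im b'.re b'.im a c a' c' hdet hdet' ha hc ha' hc',
      mul_nonneg ha ha', mul_nonneg hc hc', hs, hs']
  · simp only [Fintype.sum_prod_type, Fin.sum_univ_two, ci, Prod.ext_iff]
    norm_num
    rw [hherm, hherm', hA00, hA11, hB00, hB11]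
    simp [Complex.mul_re, Complex.mul_im]
    nlinarith [two_re_le (-b.re) (-b.im) b'.re b'.im a c a' c' (by nlinarith [hdet]) hdet'
        ha hc ha' hc',
      mul_nonneg ha ha', mul_nonneg hc hc', hs, hs']
  · simp only [Fintype.sum_prod_type, Fin.sum_univ_two, ci, Prod.ext_iff]
    norm_num
    rw [hherm, hherm', hA00, hA11, hB00, hB11]
    simp [Complex.mul_re, Complex.mul_im]
    nlinarith [two_re_le b.re b.im b'.re (-b'.im) a c c' a' hdet (by nlinarith [hdet'])
        ha hc hc' ha',
      mul_nonneg ha hc', mul_nonneg hc ha', hs, hs']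
  · simp only [Fintype.sum_prod_type, Fin.sum_univ_two, ci, Prod.ext_iff]
    norm_num
    rw [hherm, hherm', hA00, hA11, hB00, hB11]
    simp [Complex.mul_re, Complex.mul_im]
    nlinarith [two_re_le (-b.re) (-b.im) b'.re (-b'.im) a c c' a' (by nlinarith [hdet])
        (by nlinarith [hdet']) ha hc hc' ha',
      mul_nonneg ha hc', mul_nonneg hc ha', hs, hs']

lemma irt2_sq : irt2 ^ 2 = 2⁻¹ := by rw [sq, irt2_mul_irt2]

noncomputable def e0 : Fin 2 → ℂ := ![1, 0]
noncomputable def e1 : Fin 2 → ℂ := ![0, 1]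
noncomputable def xp : Fin 2 → ℂ := ![irt2, irt2]
noncomputable def xm : Fin 2 → ℂ := ![irt2, -irt2]
noncomputable def yp : Fin 2 → ℂ := ![irt2, irt2 * Complex.I]
noncomputable def ym : Fin 2 → ℂ := ![irt2, -(irt2 * Complex.I)]

lemma proj_e0 : proj e0 = !![1, 0; 0, 0] := by
  funext p q; fin_cases p <;> fin_cases q <;> simp [proj_apply, e0]
lemma proj_e1 : proj e1 = !![0, 0; 0, 1] := by
  funext p q; fin_cases p <;> fin_cases q <;> simp [proj_apply, e1]
lemma proj_xp : proj xp = !![2⁻¹, 2⁻¹; 2⁻¹, 2⁻¹] := by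
  funext p q; fin_cases p <;> fin_cases q <;>
    simp [proj_apply, xp, conj_irt2, irt2_mul_irt2]
lemma proj_xm : proj xm = !![2⁻¹, -2⁻¹; -2⁻¹, 2⁻¹] := by
  funext p q; fin_cases p <;> fin_cases q <;>
    simp [proj_apply, xm, conj_irt2, irt2_mul_irt2]
lemma proj_yp : proj yp = !![2⁻¹, -(Complex.I * 2⁻¹); Complex.I * 2⁻¹, 2⁻¹] := by
  funext p q; fin_cases p <;> fin_cases q <;>
    simp [proj_apply, yp, conj_irt2, Complex.conj_I] <;> ring_nf <;>
    simp [irt2_sq] <;> ring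
lemma proj_ym : proj ym = !![2⁻¹, Complex.I * 2⁻¹; -(Complex.I * 2⁻¹), 2⁻¹] := by
  funext p q; fin_cases p <;> fin_cases q <;>
    simp [proj_apply, ym, conj_irt2, Complex.conj_I] <;> ring_nf <;>
    simp [irt2_sq] <;> ring

lemma phiMix_comm (i j : Fin 4) : PhiMix i j = PhiMix j i := by
  unfold PhiMix; rw [add_comm]

lemma phi01 : PhiMix 0 1 = (2:ℂ)⁻¹ • (proj e0 ⊗ₖ proj e0 + proj e1 ⊗ₖ proj e1) := by
  rw [proj_e0, proj_e1]
  funext p q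
  simp only [PhiMix, Matrix.smul_apply, Matrix.add_apply, proj_bell_apply,
    Matrix.kroneckerMap_apply]
  fin_cases p <;> fin_cases q <;> simp [ci, Prod.ext_iff] <;> norm_num

lemma phi23 : PhiMix 2 3 = (2:ℂ)⁻¹ • (proj e0 ⊗ₖ proj e1 + proj e1 ⊗ₖ proj e0) := by
  rw [proj_e0, proj_e1]
  funext p q
  simp only [PhiMix, Matrix.smul_apply, Matrix.add_apply, proj_bell_apply,
    Matrix.kroneckerMap_apply]
  fin_cases p <;> fin_cases q <;> simp [ci, Prod.ext_iff] <;> norm_num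

lemma phi02 : PhiMix 0 2 = (2:ℂ)⁻¹ • (proj xp ⊗ₖ proj xp + proj xm ⊗ₖ proj xm) := by
  rw [proj_xp, proj_xm]
  funext p q
  simp only [PhiMix, Matrix.smul_apply, Matrix.add_apply, proj_bell_apply,
    Matrix.kroneckerMap_apply]
  fin_cases p <;> fin_cases q <;> simp [ci, Prod.ext_iff] <;> norm_num

lemma phi13 : PhiMix 1 3 = (2:ℂ)⁻¹ • (proj xp ⊗ₖ proj xm + proj xm ⊗ₖ proj xp) := by
  rw [proj_xp, proj_xm]
  funext p q
  simp only [PhiMix, Matrix.smul_apply, Matrix.add_apply, proj_bell_apply,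
    Matrix.kroneckerMap_apply]
  fin_cases p <;> fin_cases q <;> simp [ci, Prod.ext_iff] <;> norm_num

lemma phi03 : PhiMix 0 3 = (2:ℂ)⁻¹ • (proj yp ⊗ₖ proj ym + proj ym ⊗ₖ proj yp) := by
  rw [proj_yp, proj_ym]
  funext p q
  simp only [PhiMix, Matrix.smul_apply, Matrix.add_apply, proj_bell_apply,
    Matrix.kroneckerMap_apply]
  fin_cases p <;> fin_cases q <;> simp [ci, Prod.ext_iff, Complex.ext_iff] <;> norm_num

lemma phi12 : PhiMix 1 2 = (2:ℂ)⁻¹ • (proj yp ⊗ₖ proj yp + proj ym ⊗ₖ proj ym) := by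
  rw [proj_yp, proj_ym]
  funext p q
  simp only [PhiMix, Matrix.smul_apply, Matrix.add_apply, proj_bell_apply,
    Matrix.kroneckerMap_apply]
  fin_cases p <;> fin_cases q <;> simp [ci, Prod.ext_iff, Complex.ext_iff] <;> norm_num

lemma phiMix_self (i : Fin 4) : PhiMix i i = proj (bell i) := by
  unfold PhiMix
  rw [← two_smul ℂ, smul_smul]
  norm_num

lemma sum_phi (i : Fin 4) :
    ∑ j ∈ Finset.univ.erase i, PhiMix i j = proj (bell i) + (2:ℂ)⁻¹ • 1 := by
  rw [Finset.sum_erase_eq_sub (Finset.mem_univ i), phiMix_self]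
  have h4 : ∑ j : Fin 4, PhiMix i j = (2:ℂ) • proj (bell i) + (2:ℂ)⁻¹ • 1 := by
    unfold PhiMix
    rw [← Finset.smul_sum, Finset.sum_add_distrib, Finset.sum_const, sum_proj_bell]
    simp only [Finset.card_univ, Fintype.card_fin]
    rw [smul_add]
    module
  rw [h4]
  module

lemma werner_dec (i : Fin 4) :
    wernerThird i = (3:ℂ)⁻¹ • ∑ j ∈ Finset.univ.erase i, PhiMix i j := by
  rw [sum_phi]
  unfold wernerThird
  rw [smul_add, smul_smul]
  norm_num
  module

lemma sigma_tilde_eq (i : Fin 4) (l : Fin 4 → ℝ) :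
    (l i : ℂ) • wernerThird i + ∑ j ∈ Finset.univ.erase i, (l j : ℂ) • PhiMix i j
    = ∑ j ∈ Finset.univ.erase i, ((l i / 3 + l j : ℝ) : ℂ) • PhiMix i j := by
  rw [werner_dec, Finset.smul_sum, Finset.smul_sum, ← Finset.sum_add_distrib]
  refine Finset.sum_congr rfl fun j _ => ?_
  rw [smul_smul, ← add_smul]
  congr 1
  push_cast
  ring

lemma normSq_irt2 : Complex.normSq irt2 = 2⁻¹ := by
  unfold irt2
  rw [← Complex.ofReal_inv, Complex.normSq_ofReal]
  rw [← Real.sqrt_inv, Real.mul_self_sqrt (by norm_num)]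

lemma den_e0 : IsDensity (proj e0) := proj_isDensity _ (by simp [e0, Fin.sum_univ_two])
lemma den_e1 : IsDensity (proj e1) := proj_isDensity _ (by simp [e1, Fin.sum_univ_two])
lemma den_xp : IsDensity (proj xp) := proj_isDensity _ (by
  simp [xp, Fin.sum_univ_two, normSq_irt2]; norm_num)
lemma den_xm : IsDensity (proj xm) := proj_isDensity _ (by
  simp [xm, Fin.sum_univ_two, normSq_irt2]; norm_num)
lemma den_yp : IsDensity (proj yp) := proj_isDensity _ (by
  simp [yp, Fin.sum_univ_two, Complex.normSq_mul, normSq_irt2]; norm_num)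
lemma den_ym : IsDensity (proj ym) := proj_isDensity _ (by
  simp [ym, Fin.sum_univ_two, Complex.normSq_mul, normSq_irt2]; norm_num)

lemma v6_0 {α : Type*} (a b c d e f : α) : ![a,b,c,d,e,f] 0 = a := rfl
lemma v6_1 {α : Type*} (a b c d e f : α) : ![a,b,c,d,e,f] 1 = b := rfl
lemma v6_2 {α : Type*} (a b c d e f : α) : ![a,b,c,d,e,f] 2 = c := rfl
lemma v6_3 {α : Type*} (a b c d e f : α) : ![a,b,c,d,e,f] 3 = d := rfl
lemma v6_4 {α : Type*} (a b c d e f : α) : ![a,b,c,d,e,f] 4 = e := rfl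
lemma v6_5 {α : Type*} (a b c d e f : α) : ![a,b,c,d,e,f] 5 = f := rfl

lemma sep_sigma_tilde (i : Fin 4) (l : Fin 4 → ℝ) (hl : ∀ j, 0 ≤ l j)
    (hsum : ∑ j, l j = 1) :
    IsSepState ((l i : ℂ) • wernerThird i
      + ∑ j ∈ Finset.univ.erase i, (l j : ℂ) • PhiMix i j) := by
  rw [sigma_tilde_eq]
  rw [Fin.sum_univ_four] at hsum
  have h0 := hl 0; have h1 := hl 1; have h2 := hl 2; have h3 := hl 3
  fin_cases i <;>
    rw [Finset.sum_erase_eq_sub (Finset.mem_univ _), Fin.sum_univ_four] <;>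
    simp only [Fin.zero_eta, Fin.mk_one, Fin.reduceFinMk]
  · refine ⟨6, ![(l 0/3 + l 1)/2, (l 0/3 + l 1)/2, (l 0/3 + l 2)/2, (l 0/3 + l 2)/2,
      (l 0/3 + l 3)/2, (l 0/3 + l 3)/2],
      ![proj e0, proj e1, proj xp, proj xm, proj yp, proj ym],
      ![proj e0, proj e1, proj xp, proj xm, proj ym, proj yp], ?_, ?_, ?_, ?_, ?_⟩
    · intro k; fin_cases k <;> simp [v6_0, v6_1, v6_2, v6_3, v6_4, v6_5] <;> linarith
    · rw [Fin.sum_univ_six]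
      simp only [v6_0, v6_1, v6_2, v6_3, v6_4, v6_5]; linarith
    · intro k; fin_cases k <;>
        simp [v6_0, v6_1, v6_2, v6_3, v6_4, v6_5, den_e0, den_e1, den_xp, den_xm, den_yp, den_ym]
    · intro k; fin_cases k <;>
        simp [v6_0, v6_1, v6_2, v6_3, v6_4, v6_5, den_e0, den_e1, den_xp, den_xm, den_yp, den_ym]
    · rw [Fin.sum_univ_six]
      simp only [v6_0, v6_1, v6_2, v6_3, v6_4, v6_5]
      rw [phi01, phi02, phi03, phiMix_self]
      push_cast
      module
  · refine ⟨6, ![(l 1/3 + l 0)/2, (l 1/3 + l 0)/2, (l 1/3 + l 2)/2, (l 1/3 + l 2)/2,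
      (l 1/3 + l 3)/2, (l 1/3 + l 3)/2],
      ![proj e0, proj e1, proj yp, proj ym, proj xp, proj xm],
      ![proj e0, proj e1, proj yp, proj ym, proj xm, proj xp], ?_, ?_, ?_, ?_, ?_⟩
    · intro k; fin_cases k <;> simp [v6_0, v6_1, v6_2, v6_3, v6_4, v6_5] <;> linarith
    · rw [Fin.sum_univ_six]
      simp only [v6_0, v6_1, v6_2, v6_3, v6_4, v6_5]; linarith
    · intro k; fin_cases k <;>
        simp [v6_0, v6_1, v6_2, v6_3, v6_4, v6_5, den_e0, den_e1, den_xp, den_xm, den_yp, den_ym]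
    · intro k; fin_cases k <;>
        simp [v6_0, v6_1, v6_2, v6_3, v6_4, v6_5, den_e0, den_e1, den_xp, den_xm, den_yp, den_ym]
    · rw [Fin.sum_univ_six]
      simp only [v6_0, v6_1, v6_2, v6_3, v6_4, v6_5]
      rw [phiMix_comm 1 0, phi01, phi12, phi13, phiMix_self]
      push_cast
      module
  · refine ⟨6, ![(l 2/3 + l 0)/2, (l 2/3 + l 0)/2, (l 2/3 + l 1)/2, (l 2/3 + l 1)/2,
      (l 2/3 + l 3)/2, (l 2/3 + l 3)/2],
      ![proj xp, proj xm, proj yp, proj ym, proj e0, proj e1],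
      ![proj xp, proj xm, proj yp, proj ym, proj e1, proj e0], ?_, ?_, ?_, ?_, ?_⟩
    · intro k; fin_cases k <;> simp [v6_0, v6_1, v6_2, v6_3, v6_4, v6_5] <;> linarith
    · rw [Fin.sum_univ_six]
      simp only [v6_0, v6_1, v6_2, v6_3, v6_4, v6_5]; linarith
    · intro k; fin_cases k <;>
        simp [v6_0, v6_1, v6_2, v6_3, v6_4, v6_5, den_e0, den_e1, den_xp, den_xm, den_yp, den_ym]
    · intro k; fin_cases k <;>
        simp [v6_0, v6_1, v6_2, v6_3, v6_4, v6_5, den_e0, den_e1, den_xp, den_xm, den_yp, den_ym]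
    · rw [Fin.sum_univ_six]
      simp only [v6_0, v6_1, v6_2, v6_3, v6_4, v6_5]
      rw [phiMix_comm 2 0, phi02, phiMix_comm 2 1, phi12, phi23, phiMix_self]
      push_cast
      module
  · refine ⟨6, ![(l 3/3 + l 0)/2, (l 3/3 + l 0)/2, (l 3/3 + l 1)/2, (l 3/3 + l 1)/2,
      (l 3/3 + l 2)/2, (l 3/3 + l 2)/2],
      ![proj yp, proj ym, proj xp, proj xm, proj e0, proj e1],
      ![proj ym, proj yp, proj xm, proj xp, proj e1, proj e0], ?_, ?_, ?_, ?_, ?_⟩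
    · intro k; fin_cases k <;> simp [v6_0, v6_1, v6_2, v6_3, v6_4, v6_5] <;> linarith
    · rw [Fin.sum_univ_six]
      simp only [v6_0, v6_1, v6_2, v6_3, v6_4, v6_5]; linarith
    · intro k; fin_cases k <;>
        simp [v6_0, v6_1, v6_2, v6_3, v6_4, v6_5, den_e0, den_e1, den_xp, den_xm, den_yp, den_ym]
    · intro k; fin_cases k <;>
        simp [v6_0, v6_1, v6_2, v6_3, v6_4, v6_5, den_e0, den_e1, den_xp, den_xm, den_yp, den_ym]
    · rw [Fin.sum_univ_six]
      simp only [v6_0, v6_1, v6_2, v6_3, v6_4, v6_5]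
      rw [phiMix_comm 3 0, phi03, phiMix_comm 3 1, phi13, phiMix_comm 3 2, phi23, phiMix_self]
      push_cast
      module

lemma ip_add_left {n : Type*} [Fintype n] (A B C : Matrix n n ℂ) :
    ip (A + B) C = ip A C + ip B C := by
  rw [ip_symm, ip_add_right, ip_symm C A, ip_symm C B]

lemma ip_sub_left {n : Type*} [Fintype n] (A B C : Matrix n n ℂ) :
    ip (A - B) C = ip A C - ip B C := by
  rw [ip_symm, ip_sub_right, ip_symm C A, ip_symm C B]

lemma bell_norm (j : Fin 4) : ∑ p, Complex.normSq (bell j p) = 1 := by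
  have e : ∀ p, Complex.normSq (bell j p) = 2⁻¹ * Complex.normSq (ci j p) := by
    intro p; rw [bell_eq, Complex.normSq_mul, normSq_irt2]
  simp only [e]
  fin_cases j <;>
    simp [ci, Fintype.sum_prod_type, Fin.sum_univ_two, Prod.ext_iff] <;> norm_num

lemma ip_psi_psi (i j : Fin 4) :
    ip (proj (bell i)) (proj (bell j)) = if i = j then 1 else 0 := by
  rw [ip_proj_proj, bell_inner]
  split_ifs <;> simp

lemma ip_one_psi (j : Fin 4) : ip 1 (proj (bell j)) = 1 := by
  rw [ip_one_left, proj_trace _ (bell_norm j)]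
  simp

lemma ip_psi_one (j : Fin 4) : ip (proj (bell j)) 1 = 1 := by
  rw [ip_symm]; exact ip_one_psi j

lemma ip_one_one' : ip (1 : Matrix (Fin 2 × Fin 2) (Fin 2 × Fin 2) ℂ) 1 = 4 := by
  rw [ip_one_right, Matrix.trace_one]
  simp

-- the witness operator
noncomputable def Wop (i : Fin 4) : Matrix (Fin 2 × Fin 2) (Fin 2 × Fin 2) ℂ :=
  proj (bell i) - (((4:ℝ)⁻¹ : ℝ) : ℂ) • 1

lemma hsW (i : Fin 4) : hsNormSq (Wop i) = 3 / 4 := by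
  rw [hsNormSq_eq_ip]
  unfold Wop
  rw [ip_sub_left, ip_sub_right, ip_sub_right, ip_smul_right, ip_smul_left, ip_smul_left,
    ip_smul_right, ip_psi_psi, ip_psi_one, ip_one_psi, ip_one_one']
  norm_num

lemma ip_W_psi (i j : Fin 4) :
    ip (Wop i) (proj (bell j)) = (if i = j then 1 else 0) - 4⁻¹ := by
  unfold Wop
  rw [ip_sub_left, ip_smul_left, ip_psi_psi, ip_one_psi]
  norm_num

lemma ip_W_phi (i j : Fin 4) (hij : i ≠ j) : ip (Wop i) (PhiMix i j) = 4⁻¹ := by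
  unfold PhiMix
  rw [show ((2:ℂ)⁻¹ : ℂ) = (((2⁻¹:ℝ)):ℂ) from by norm_num, ip_smul_right, ip_add_right,
    ip_W_psi, ip_W_psi]
  simp [hij, if_neg (Ne.symm hij)]
  norm_num

lemma ip_W_sigma (i : Fin 4) (l : Fin 4 → ℝ) (hsum : ∑ j, l j = 1) :
    ip (Wop i) ((l i : ℂ) • proj (bell i)
      + ∑ j ∈ Finset.univ.erase i, (l j : ℂ) • PhiMix i j) = 4⁻¹ + l i / 2 := by
  rw [ip_add_right, ip_smul_right, ip_W_psi, ip_sum_right]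
  have e : ∀ j ∈ Finset.univ.erase i, ip (Wop i) ((l j : ℂ) • PhiMix i j) = l j * 4⁻¹ := by
    intro j hj
    rw [ip_smul_right, ip_W_phi i j (Ne.symm (Finset.mem_erase.mp hj).1)]
  rw [Finset.sum_congr rfl e, ← Finset.sum_mul]
  have hre : ∑ j ∈ Finset.univ.erase i, l j = 1 - l i := by
    have := Finset.sum_erase_add Finset.univ l (Finset.mem_univ i)
    linarith [this.symm ▸ hsum]
  rw [hre]
  simp
  ring

lemma sep_ip_psi (i : Fin 4) (ρ : Matrix (Fin 2 × Fin 2) (Fin 2 × Fin 2) ℂ)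
    (h : IsSepState ρ) : ip (proj (bell i)) ρ ≤ 1 / 2 := by
  obtain ⟨k, p, ρ₁, ρ₂, hp, hps, h1, h2, rfl⟩ := h
  rw [ip_sum_right]
  calc ∑ j, ip (proj (bell i)) ((p j : ℂ) • (ρ₁ j ⊗ₖ ρ₂ j))
      ≤ ∑ j, p j * (1/2) := by
        apply Finset.sum_le_sum
        intro j _
        rw [ip_smul_right]
        exact mul_le_mul_of_nonneg_left (kron_overlap i (ρ₁ j) (ρ₂ j) (h1 j) (h2 j)) (hp j)
    _ = 1/2 := by rw [← Finset.sum_mul, hps]; norm_num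

lemma sep_ip_one (ρ : Matrix (Fin 2 × Fin 2) (Fin 2 × Fin 2) ℂ)
    (h : IsSepState ρ) : ip 1 ρ = 1 := by
  obtain ⟨k, p, ρ₁, ρ₂, hp, hps, h1, h2, rfl⟩ := h
  rw [ip_sum_right]
  have e : ∀ j, ip (1 : Matrix (Fin 2 × Fin 2) (Fin 2 × Fin 2) ℂ) ((p j : ℂ) • (ρ₁ j ⊗ₖ ρ₂ j)) = p j := by
    intro j
    rw [ip_smul_right, ip_one_left, Matrix.trace_kronecker, (h1 j).2, (h2 j).2]
    simp
  simp only [e]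
  exact hps

lemma sep_ip_W (i : Fin 4) (ρ : Matrix (Fin 2 × Fin 2) (Fin 2 × Fin 2) ℂ)
    (h : IsSepState ρ) : ip (Wop i) ρ ≤ 4⁻¹ := by
  unfold Wop
  rw [ip_sub_left, ip_smul_left, sep_ip_one ρ h]
  have := sep_ip_psi i ρ h
  linarith

lemma werner_sub_psi (i : Fin 4) :
    wernerThird i - proj (bell i)
      = (((6:ℝ)⁻¹ : ℝ) : ℂ) • (1 : Matrix (Fin 2 × Fin 2) (Fin 2 × Fin 2) ℂ)
        + (((-(2/3) : ℝ)) : ℂ) • proj (bell i) := by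
  unfold wernerThird
  push_cast
  module

lemma hs_werner_sub (i : Fin 4) : hsNormSq (wernerThird i - proj (bell i)) = 1 / 3 := by
  rw [hsNormSq_eq_ip, werner_sub_psi]
  rw [ip_add_left, ip_add_right, ip_add_right]
  simp only [ip_smul_left, ip_smul_right, ip_one_one', ip_one_psi, ip_psi_one, ip_psi_psi]
  norm_num

lemma hs_scaled (i : Fin 4) (r : ℝ) :
    hsNormSq ((r : ℂ) • (wernerThird i - proj (bell i))) = r ^ 2 / 3 := by
  rw [hsNormSq_eq_ip, ip_smul_left, ip_smul_right, ← hsNormSq_eq_ip, hs_werner_sub]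
  ring

theorem EHS_bell_mixture (i : Fin 4) (l : Fin 4 → ℝ)
    (hl : ∀ j, 0 ≤ l j) (hsum : ∑ j, l j = 1) :
    IsLeast
      {x | ∃ ρ, IsSepState ρ ∧
        x = hsNormSq (ρ - ((l i : ℂ) • proj (bell i)
              + ∑ j ∈ Finset.univ.erase i, (l j : ℂ) • PhiMix i j))}
      (l i ^ 2 / 3)
    ∧ IsSepState ((l i : ℂ) • wernerThird i
        + ∑ j ∈ Finset.univ.erase i, (l j : ℂ) • PhiMix i j)
    ∧ hsNormSq (((l i : ℂ) • wernerThird i + ∑ j ∈ Finset.univ.erase i, (l j : ℂ) • PhiMix i j)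
        - ((l i : ℂ) • proj (bell i) + ∑ j ∈ Finset.univ.erase i, (l j : ℂ) • PhiMix i j))
      = l i ^ 2 / 3 := by
  have hthird : hsNormSq (((l i : ℂ) • wernerThird i
        + ∑ j ∈ Finset.univ.erase i, (l j : ℂ) • PhiMix i j)
        - ((l i : ℂ) • proj (bell i) + ∑ j ∈ Finset.univ.erase i, (l j : ℂ) • PhiMix i j))
      = l i ^ 2 / 3 := by
    rw [add_sub_add_right_eq_sub, ← smul_sub, hs_scaled]
  have hsep := sep_sigma_tilde i l hl hsum
  refine ⟨⟨⟨_, hsep, hthird.symm⟩, ?_⟩, hsep, hthird⟩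
  rintro x ⟨ρ, hρ, rfl⟩
  set σ := (l i : ℂ) • proj (bell i) + ∑ j ∈ Finset.univ.erase i, (l j : ℂ) • PhiMix i j with hσ
  have hu : ip (Wop i) (ρ - σ) ≤ -(l i) / 2 := by
    rw [ip_sub_right]
    have h1 := sep_ip_W i ρ hρ
    have h2 := ip_W_sigma i l hsum
    rw [← hσ] at h2
    rw [h2]
    linarith
  have h := key_expand (ρ - σ) (Wop i) (-(2/3) * l i)
  rw [hsW] at h
  have hli := hl i
  nlinarith [h, hu, hli, mul_le_mul_of_nonneg_left hu (by linarith : (0:ℝ) ≤ (4/3) * l i)]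
end

section
/- If σ̃ is the closest separable state to σ in Hilbert-Schmidt norm, then for every λ ∈ [0,1], the convex combination λσ + (1−λ)σ̃ has the same closest separable state σ̃, and E_HS(λσ + (1−λ)σ̃) = λ²E_HS(σ). -/
open Matrix ComplexOrder Kronecker

/-- Hilbert-Schmidt real inner product. -/
noncomputable def hsIp {n : Type*} [Fintype n] (A B : Matrix n n ℂ) : ℝ :=
  (Aᴴ * B).trace.re

lemma rsmul' {α β : Type*} (r : ℝ) (M : Matrix α β ℂ) : r • M = (r : ℂ) • M := by
  ext i j; simp [Matrix.smul_apply, Complex.real_smul]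

lemma hsIp_symm {n : Type*} [Fintype n] (A B : Matrix n n ℂ) :
    hsIp B A = hsIp A B := by
  unfold hsIp
  have h : Bᴴ * A = (Aᴴ * B)ᴴ := by simp [Matrix.conjTranspose_mul]
  rw [h, Matrix.trace_conjTranspose]
  simp

lemma hsNormSq_expand {n : Type*} [Fintype n] (A B : Matrix n n ℂ) :
    hsNormSq (A - B) = hsNormSq A - 2 * hsIp A B + hsNormSq B := by
  unfold hsNormSq hsIp
  have h : (A - B)ᴴ * (A - B) = Aᴴ * A - Aᴴ * B - Bᴴ * A + Bᴴ * B := by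
    rw [Matrix.conjTranspose_sub]; noncomm_ring
  rw [h]
  simp only [Matrix.trace_add, Matrix.trace_sub, Complex.add_re, Complex.sub_re]
  have h2 := hsIp_symm A B
  unfold hsIp at h2
  rw [h2]; ring

lemma hsNormSq_nonneg {n : Type*} [Fintype n] (A : Matrix n n ℂ) : 0 ≤ hsNormSq A := by
  unfold hsNormSq
  rw [Matrix.trace]
  simp only [Matrix.diag_apply, Matrix.mul_apply, Complex.re_sum]
  refine Finset.sum_nonneg fun j _ => Finset.sum_nonneg fun i _ => ?_
  simp only [Matrix.conjTranspose_apply]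
  have h : (star (A i j) * A i j) = ((Complex.normSq (A i j) : ℝ) : ℂ) := by
    rw [Complex.star_def, mul_comm, Complex.mul_conj]
  rw [h, Complex.ofReal_re]
  exact Complex.normSq_nonneg _

lemma hsNormSq_smul {n : Type*} [Fintype n] (r : ℝ) (A : Matrix n n ℂ) :
    hsNormSq (r • A) = r ^ 2 * hsNormSq A := by
  unfold hsNormSq
  rw [rsmul']
  have h : ((r:ℂ) • A)ᴴ * ((r:ℂ) • A) = ((r:ℂ)^2) • (Aᴴ * A) := by
    ext i j
    simp only [Matrix.mul_apply, Matrix.smul_apply, Matrix.conjTranspose_apply, smul_eq_mul,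
      Finset.mul_sum]
    apply Finset.sum_congr rfl
    intro k _
    simp [Complex.star_def]
    ring
  rw [h, Matrix.trace_smul, smul_eq_mul]
  have h2 : ((r:ℂ)^2) = ((r^2 : ℝ) : ℂ) := by push_cast; ring
  rw [h2, Complex.mul_re, Complex.ofReal_re, Complex.ofReal_im]
  ring

lemma hsIp_smul_right {n : Type*} [Fintype n] (r : ℝ) (A B : Matrix n n ℂ) :
    hsIp A (r • B) = r * hsIp A B := by
  unfold hsIp
  rw [rsmul', Matrix.mul_smul, Matrix.trace_smul, smul_eq_mul]
  simp [Complex.mul_re]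

lemma hsIp_smul_left {n : Type*} [Fintype n] (r : ℝ) (A B : Matrix n n ℂ) :
    hsIp (r • A) B = r * hsIp A B := by
  rw [hsIp_symm, hsIp_smul_right, hsIp_symm]

lemma hsNormSq_neg {n : Type*} [Fintype n] (A : Matrix n n ℂ) :
    hsNormSq (-A) = hsNormSq A := by
  unfold hsNormSq; simp

lemma sep_convex {m n : Type*} [Fintype m] [Fintype n] [DecidableEq m] [DecidableEq n]
    {ρ τ : Matrix (m × n) (m × n) ℂ} (hρ : IsSepState ρ) (hτ : IsSepState τ)
    (t : ℝ) (h0 : 0 ≤ t) (h1 : t ≤ 1) :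
    IsSepState ((1 - t) • τ + t • ρ) := by
  obtain ⟨k1, p1, a1, b1, hp1, hs1, ha1, hb1, he1⟩ := hτ
  obtain ⟨k2, p2, a2, b2, hp2, hs2, ha2, hb2, he2⟩ := hρ
  refine ⟨k1 + k2, Fin.addCases (fun i => (1 - t) * p1 i) (fun i => t * p2 i),
    Fin.addCases a1 a2, Fin.addCases b1 b2, ?_, ?_, ?_, ?_, ?_⟩
  · intro i
    induction i using Fin.addCases with
    | left j => simpa using mul_nonneg (by linarith) (hp1 j)
    | right j => simpa using mul_nonneg h0 (hp2 j)
  · rw [Fin.sum_univ_add]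
    simp only [Fin.addCases_left, Fin.addCases_right]
    rw [← Finset.mul_sum, ← Finset.mul_sum, hs1, hs2]
    ring
  · intro i
    induction i using Fin.addCases with
    | left j => simpa using ha1 j
    | right j => simpa using ha2 j
  · intro i
    induction i using Fin.addCases with
    | left j => simpa using hb1 j
    | right j => simpa using hb2 j
  · rw [Fin.sum_univ_add]
    simp only [Fin.addCases_left, Fin.addCases_right]
    rw [he1, he2, rsmul', rsmul', Finset.smul_sum, Finset.smul_sum]
    congr 1 <;> (apply Finset.sum_congr rfl; intro i _; rw [smul_smul]; push_cast; ring_nf)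

theorem convex_combination_with_basepoint {m n : Type*} [Fintype m] [Fintype n]
    [DecidableEq m] [DecidableEq n]
    (σ σt : Matrix (m × n) (m × n) ℂ) (hσ : IsDensity σ)
    (hσt : IsSepState σt)
    (hmin : ∀ ρ, IsSepState ρ → hsNormSq (σt - σ) ≤ hsNormSq (ρ - σ))
    (l : ℝ) (hl0 : 0 ≤ l) (hl1 : l ≤ 1) :
    (∀ ρ, IsSepState ρ →
        hsNormSq (σt - (l • σ + (1 - l) • σt)) ≤ hsNormSq (ρ - (l • σ + (1 - l) • σt)))
    ∧ hsNormSq (σt - (l • σ + (1 - l) • σt)) = l ^ 2 * hsNormSq (σt - σ) := by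
  have key : σt - (l • σ + (1 - l) • σt) = l • (σt - σ) := by
    ext i j
    simp [Matrix.smul_apply, Matrix.sub_apply, Matrix.add_apply]
    ring
  have part2 : hsNormSq (σt - (l • σ + (1 - l) • σt)) = l ^ 2 * hsNormSq (σt - σ) := by
    rw [key, hsNormSq_smul]
  refine ⟨?_, part2⟩
  intro ρ hρ
  set X := ρ - σt with hX
  set Y := σ - σt with hY
  set C := hsNormSq X with hC
  have hC0 : 0 ≤ C := hsNormSq_nonneg X
  -- variational step
  have step : ∀ t : ℝ, 0 < t → t ≤ 1 → hsIp X Y ≤ t / 2 * C := by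
    intro t ht0 ht1
    have hsep := sep_convex hρ hσt t (le_of_lt ht0) ht1
    have h := hmin _ hsep
    have hM : ((1 - t) • σt + t • ρ) - σ = t • X - Y := by
      ext i j
      simp [hX, hY, Matrix.smul_apply, Matrix.sub_apply, Matrix.add_apply]
      ring
    have hL : hsNormSq (σt - σ) = hsNormSq Y := by
      rw [show σt - σ = -Y by rw [hY, neg_sub], hsNormSq_neg]
    rw [hM, hL, hsNormSq_expand (t • X) Y, hsNormSq_smul, hsIp_smul_left] at h
    nlinarith [h]
  have hip : hsIp X Y ≤ 0 := by
    refine le_of_forall_pos_le_add ?_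
    intro ε hε
    have ht0 : 0 < min 1 (2 * ε / (C + 1)) := by
      apply lt_min one_pos
      positivity
    have ht1 : min 1 (2 * ε / (C + 1)) ≤ 1 := min_le_left _ _
    have h := step _ ht0 ht1
    have h2 : min 1 (2 * ε / (C + 1)) ≤ 2 * ε / (C + 1) := min_le_right _ _
    have hC1 : (0:ℝ) < C + 1 := by linarith
    have : min 1 (2 * ε / (C + 1)) / 2 * C ≤ ε := by
      calc min 1 (2 * ε / (C + 1)) / 2 * C ≤ (2 * ε / (C + 1)) / 2 * C := by
            apply mul_le_mul_of_nonneg_right _ hC0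
            linarith
        _ ≤ ε := by
            rw [div_div]
            rw [div_mul_eq_mul_div, div_le_iff₀ (by linarith : (0:ℝ) < (C+1)*2)]
            nlinarith
    linarith
  -- conclude
  have hR : ρ - (l • σ + (1 - l) • σt) = X - l • Y := by
    ext i j
    simp [hX, hY, Matrix.smul_apply, Matrix.sub_apply, Matrix.add_apply]
    ring
  rw [part2]
  have hL : hsNormSq (σt - σ) = hsNormSq Y := by
    rw [show σt - σ = -Y by rw [hY, neg_sub], hsNormSq_neg]
  rw [hL, hR, hsNormSq_expand X (l • Y), hsNormSq_smul, hsIp_smul_right]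
  have : l * hsIp X Y ≤ 0 := mul_nonpos_of_nonneg_of_nonpos hl0 hip
  nlinarith
end
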